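/- For every nonnegative integer n and every real x, Σ_{m=0}^n ((−n)_m (1/2)_m / ((1)_m m!)) (1−x)^m = ((1/2)_n/n!) · Σ_{m=0}^n ((−n)_m (1/2)_m / ((1/2−n)_m m!)) x^m. In hypergeometric notation: ₂F₁(−n,1/2;1;1−x) = ((1/2)_n/n!) · ₂F₁(−n,1/2;1/2−n;x). -/

import Mathlib

open Real Finset

/-- Pochhammer symbol `(a)_n = a (a+1) ⋯ (a+n-1)`. -/
noncomputable def poch (a : ℝ) (n : ℕ) : ℝ := ∏ i ∈ Finset.range n, (a + i)

/-!
The theorem is the case `b = 1/2`, `c = 1` of the terminating transformation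
`₂F₁(-n, b; c; 1 - x) = (c - b)_n / (c)_n · ₂F₁(-n, b; b - c - n + 1; x)`.
Since `(-n)_m / m! = (-1)^m C(n, m)`, both sides are binomial sums. Expanding `(x - 1)^m`, the
coefficient of `x^k` on the left is `C(n, k) Σ_j (-1)^j C(n - k, j) (b)_{k+j} / (c)_{k+j}`.
Writing `1 / (c)_{k+j} = (c + k + j)_{n-k-j} / (c)_n` turns the sum into the Chu–Vandermonde sum
for `(c - b)_{n-k}`, and the reflection `(c - b)_n = (-1)^k (c - b)_{n-k} (b - c - n + 1)_k`
identifies the result with the coefficient on the right.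
-/

open Polynomial Nat

lemma poch_eq_eval_ascPochhammer (a : ℝ) (n : ℕ) : poch a n = (ascPochhammer ℝ n).eval a := by
  induction n with
  | zero => simp [poch]
  | succ n ih => rw [poch, prod_range_succ, ← poch, ih, ascPochhammer_succ_eval]

lemma poch_add (a : ℝ) (m k : ℕ) : poch a (m + k) = poch a m * poch (a + m) k := by
  simp only [poch, prod_range_add, Nat.cast_add, add_assoc]

lemma poch_one (n : ℕ) : poch 1 n = n ! := by
  rw [poch_eq_eval_ascPochhammer, ascPochhammer_eval_one]

lemma poch_neg (r : ℝ) (k : ℕ) : poch (-r) k = (-1) ^ k * poch (r - k + 1) k := by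
  rw [poch_eq_eval_ascPochhammer, poch_eq_eval_ascPochhammer,
    ascPochhammer_eval_neg_eq_descPochhammer, descPochhammer_eval_eq_ascPochhammer]

lemma poch_neg_natCast (n m : ℕ) : poch (-n) m = (-1) ^ m * n.choose m * m ! := by
  rw [poch_eq_eval_ascPochhammer, ascPochhammer_eval_neg_eq_descPochhammer,
    descPochhammer_eval_eq_descFactorial, descFactorial_eq_factorial_mul_choose]
  push_cast
  ring

lemma poch_ne_zero_of_le {a : ℝ} {m n : ℕ} (h : poch a n ≠ 0) (hmn : m ≤ n) : poch a m ≠ 0 := by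
  rw [← Nat.add_sub_cancel' hmn, poch_add] at h
  exact left_ne_zero_of_mul h

lemma poch_ne_zero_iff (a : ℝ) (n : ℕ) : poch a n ≠ 0 ↔ ∀ k < n, a ≠ -k := by
  simp [poch_eq_eval_ascPochhammer, eq_neg_iff_add_eq_zero, add_comm]

lemma poch_half_sub_natCast_ne_zero (n k : ℕ) : poch (1 / 2 - n) k ≠ 0 := by
  refine (poch_ne_zero_iff _ _).mpr fun i _ h => ?_
  have h2 : ((2 * i + 1 : ℕ) : ℝ) = (2 * n : ℕ) := by push_cast; linarith
  have h3 : 2 * i + 1 = 2 * n := by exact_mod_cast h2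
  omega

lemma poch_eq_neg_one_pow_mul_poch (a : ℝ) {n k : ℕ} (hk : k ≤ n) :
    poch a n = (-1) ^ k * poch a (n - k) * poch (1 - a - n) k := by
  have hsplit := poch_add a (n - k) k
  rw [Nat.sub_add_cancel hk] at hsplit
  rw [show 1 - a - n = -(a + n - 1) by ring, poch_neg, hsplit, Nat.cast_sub hk,
    show a + n - 1 - k + 1 = a + (n - k) by ring, ← mul_assoc, mul_right_comm _ _ ((-1) ^ k),
    ← mul_pow]
  norm_num

lemma smeval_descPochhammer_eq_poch (r : ℝ) (n : ℕ) :
    (descPochhammer ℤ n).smeval r = poch (r - n + 1) n := by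
  rw [descPochhammer_smeval_eq_ascPochhammer, ascPochhammer_smeval_eq_eval,
    poch_eq_eval_ascPochhammer]

-- Chu–Vandermonde for falling factorials, as `(-1)^j (b)_j` is the falling factorial of `-b`.
lemma poch_sub_eq_sum (b c : ℝ) (N : ℕ) :
    poch (c - b) N = ∑ j ∈ range (N + 1),
      (-1) ^ j * N.choose j * poch b j * poch (c + j) (N - j) := by
  have hlhs : poch (c - b) N = (descPochhammer ℤ N).smeval (-b + (c + N - 1)) := by
    rw [smeval_descPochhammer_eq_poch]; ring_nf
  rw [hlhs, Ring.descPochhammer_smeval_add _ (Commute.all _ _),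
    Nat.sum_antidiagonal_eq_sum_range_succ (fun i j => (N.choose i : ℝ) *
      ((descPochhammer ℤ i).smeval (-b) * (descPochhammer ℤ j).smeval (c + N - 1)))]
  refine sum_congr rfl fun j hj => ?_
  have hjN : j ≤ N := Nat.lt_succ_iff.mp (mem_range.mp hj)
  have hneg : poch (-b - j + 1) j = (-1) ^ j * poch b j := by
    rw [show -b - j + 1 = -(b + j - 1) by ring, poch_neg]; ring_nf
  rw [smeval_descPochhammer_eq_poch, smeval_descPochhammer_eq_poch, hneg, Nat.cast_sub hjN,
    show c + N - 1 - (N - j) + 1 = c + j by ring]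
  ring

lemma sum_choose_mul_sub_one_pow {R : Type*} [CommRing R] (g : ℕ → R) (n : ℕ) (x : R) :
    ∑ m ∈ range (n + 1), n.choose m * g m * (x - 1) ^ m =
      ∑ k ∈ range (n + 1), n.choose k *
        (∑ j ∈ range (n - k + 1), (-1) ^ j * (n - k).choose j * g (k + j)) * x ^ k := by
  let f : ℕ → ℕ → R := fun k j => n.choose k * ((-1) ^ j * (n - k).choose j * g (k + j)) * x ^ k
  calc ∑ m ∈ range (n + 1), n.choose m * g m * (x - 1) ^ m
      = ∑ m ∈ range (n + 1), ∑ k ∈ range (m + 1), f k (m - k) := by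
        refine sum_congr rfl fun m _ => ?_
        rw [sub_eq_add_neg, add_pow, mul_sum]
        refine sum_congr rfl fun k hk => ?_
        obtain ⟨j, rfl⟩ := Nat.exists_eq_add_of_le (Nat.lt_succ_iff.mp (mem_range.mp hk))
        have hchoose := congrArg (Nat.cast (R := R))
          (Nat.choose_mul (n := n) (Nat.le_add_right k j))
        push_cast at hchoose
        simp only [f, Nat.add_sub_cancel_left] at hchoose ⊢
        linear_combination (g (k + j) * x ^ k * (-1) ^ j) * hchoose
    _ = ∑ k ∈ range (n + 1), ∑ j ∈ range (n + 1 - k), f k j := sum_range_diag_flip _ _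
    _ = _ := by
        refine sum_congr rfl fun k hk => ?_
        rw [Nat.sub_add_comm (Nat.lt_succ_iff.mp (mem_range.mp hk)), mul_sum, sum_mul]

-- `₂F₁(-n, b; c; x)`
noncomputable def terminating2F1 (n : ℕ) (b c x : ℝ) : ℝ :=
  ∑ m ∈ range (n + 1), poch (-(n : ℝ)) m * poch b m / (poch c m * (m ! : ℝ)) * x ^ m

lemma terminating2F1_eq_sum_choose (n : ℕ) (b c x : ℝ) :
    terminating2F1 n b c x = ∑ m ∈ range (n + 1), n.choose m * (poch b m / poch c m) * (-x) ^ m := by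
  refine sum_congr rfl fun m _ => ?_
  rw [poch_neg_natCast, neg_pow, mul_right_comm _ (m ! : ℝ), mul_div_mul_right _ _ (by positivity)]
  ring

lemma sum_choose_mul_poch_div_poch (b c : ℝ) {n k : ℕ} (hk : k ≤ n) (hc : poch c n ≠ 0) :
    ∑ j ∈ range (n - k + 1), (-1) ^ j * (n - k).choose j * (poch b (k + j) / poch c (k + j)) =
      poch b k * poch (c - b) (n - k) / poch c n := by
  rw [show c - b = c + k - (b + k) by ring, poch_sub_eq_sum, mul_sum, sum_div]
  refine sum_congr rfl fun j hj => ?_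
  have hjk : k + j ≤ n := by have := mem_range.mp hj; omega
  have hsplit := poch_add c (k + j) (n - (k + j))
  rw [Nat.add_sub_cancel' hjk, Nat.cast_add, ← add_assoc] at hsplit
  rw [hsplit] at hc
  rw [hsplit, poch_add b, show n - k - j = n - (k + j) by omega]
  field_simp [left_ne_zero_of_mul hc, right_ne_zero_of_mul hc]

theorem terminating2F1_one_sub (n : ℕ) (b c x : ℝ) (hc : poch c n ≠ 0)
    (hd : poch (b - c - n + 1) n ≠ 0) :
    terminating2F1 n b c (1 - x) =
      poch (c - b) n / poch c n * terminating2F1 n b (b - c - n + 1) x := by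
  rw [terminating2F1_eq_sum_choose, terminating2F1_eq_sum_choose, neg_sub,
    sum_choose_mul_sub_one_pow, mul_sum]
  refine sum_congr rfl fun k hk => ?_
  have hkn : k ≤ n := Nat.lt_succ_iff.mp (mem_range.mp hk)
  rw [sum_choose_mul_poch_div_poch b c hkn hc, poch_eq_neg_one_pow_mul_poch (c - b) hkn,
    show 1 - (c - b) - n = b - c - n + 1 by ring, neg_pow x]
  field_simp [poch_ne_zero_of_le hd hkn]
  rw [← pow_mul, pow_mul', neg_one_sq, one_pow, mul_one]

theorem stmt9 (n : ℕ) (x : ℝ) :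
    ∑ m ∈ Finset.range (n + 1),
        poch (-(n : ℝ)) m * poch (1/2) m / (poch 1 m * (Nat.factorial m : ℝ)) * (1 - x) ^ m
      = (poch (1/2) n / (Nat.factorial n : ℝ)) *
          ∑ m ∈ Finset.range (n + 1),
            poch (-(n : ℝ)) m * poch (1/2) m /
              (poch (1/2 - (n : ℝ)) m * (Nat.factorial m : ℝ)) * x ^ m := by
  have hd : (1 / 2 : ℝ) - 1 - n + 1 = 1 / 2 - n := by ring
  have h := terminating2F1_one_sub n (1 / 2) 1 x (by rw [poch_one]; positivity)
    (hd ▸ poch_half_sub_natCast_ne_zero n n)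
  rwa [show (1 : ℝ) - 1 / 2 = 1 / 2 by norm_num, hd, poch_one] at h
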